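/- Let w be a Catalan word of length 2k with generating-vertex set S (containing 0). Then for every index j ∈ {0,...,2k} not in S, there exists a unique generating vertex i ∈ S with i < j such that π(j) = π(i) for all circuits π ∈ Π*(w), where Π*(w) is the set of circuits π : {0,...,2k} → {1,...,n} with π(0) = π(2k) such that w[i] = w[j] implies L(π(i-1),π(i)) = L(π(j-1),π(j)) for the Wigner link function L(a,b) = (min(a,b), max(a,b)). -/

import Mathlib

open MeasureTheory

/-- A word is pair-matched if each of its letters appears exactly twice. -/
def PairMatchedWord (w : List ℕ) : Prop := ∀ a ∈ w, w.count a = 2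

/-- Reducibility to the empty word by successively deleting double letters. -/
inductive DoubleReduces : List ℕ → Prop
  | nil : DoubleReduces []
  | step (u v : List ℕ) (a : ℕ) : DoubleReduces (u ++ v) → DoubleReduces (u ++ a :: a :: v)

/-- A Catalan word: pair-matched and reducible to the empty word by
successively deleting double letters. -/
def IsCatalanWord (w : List ℕ) : Prop := PairMatchedWord w ∧ DoubleReduces w

/-- The Wigner link function `L(a,b) = (min(a,b), max(a,b))`. -/
def wignerLink (a b : ℕ) : ℕ × ℕ := (min a b, max a b)

/-- The set `Π*(w)` of circuits `π : {0,…,2k} → {1,…,n}` with `π(0) = π(2k)`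
such that `w[i] = w[j]` implies `L(π(i-1),π(i)) = L(π(j-1),π(j))`.  The letter
at the paper's position `i ∈ {1,…,2k}` is the list entry `w.get? (i-1)`. -/
def PiStar (w : List ℕ) (n : ℕ) : Set (ℕ → ℕ) :=
  {π | (∀ t ≤ w.length, π t ∈ Finset.Icc 1 n) ∧ π 0 = π w.length ∧
    ∀ s t, s < w.length → t < w.length → w[s]? = w[t]? →
      wignerLink (π s) (π (s + 1)) = wignerLink (π t) (π (t + 1))}

/-- The set `S` of generating vertices of `w`: the vertex `0` together with
those `i` at which a letter occurs for the first time. -/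
def genVertices (w : List ℕ) : Finset ℕ :=
  insert 0 (((Finset.range w.length).filter
    (fun t => ∀ s < t, w[s]? ≠ w[t]?)).image (· + 1))

/-- `φ` assigns to each vertex `j` the (unique) generating vertex `φ(j) ≤ j`
with `π(j) = π(φ(j))` for every circuit `π ∈ Π*(w)`. -/
def IsPhi (w : List ℕ) (φ : ℕ → ℕ) : Prop :=
  ∀ j ≤ w.length, φ j ∈ genVertices w ∧ φ j ≤ j ∧
    ∀ (n : ℕ) (π : ℕ → ℕ), π ∈ PiStar w n → π j = π (φ j)

/-! Induction along the reduction of `w`. Deleting a double letter `a a` at list positions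
`m, m + 1` (`m = u.length`) leaves a shorter Catalan word `u ++ v`. The two edges labelled `a`
have the same link, which forces `π (m + 2) = π m`; hence a circuit of `w`, with vertices `m + 1`
and `m + 2` skipped, is a circuit of `u ++ v`, while vertex `m + 1` is new and generating. This
builds `φ`. Conversely a circuit of `u ++ v` extends to one of `w` by giving vertex `m + 1` any
value; a fresh value keeps a circuit injective on the generating vertices, and such a circuit
separates any two candidates for `φ j`.

`liftPos m` embeds the letter positions of `u ++ v` into those of `w`, `liftVertex m` the
vertices, and `dropVertex m` is a left inverse of `liftVertex m`. -/

lemma wignerLink_comm (x y : ℕ) : wignerLink x y = wignerLink y x := by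
  simp only [wignerLink, min_comm, max_comm]

lemma eq_of_wignerLink_eq {x y c : ℕ} (h : wignerLink x c = wignerLink c y) : x = y := by
  simp only [wignerLink, Prod.mk.injEq] at h
  omega

lemma piStar_mono (w : List ℕ) {n n' : ℕ} (h : n ≤ n') : PiStar w n ⊆ PiStar w n' := by
  rintro π ⟨hrange, hclosed, hlink⟩
  refine ⟨fun t ht => ?_, hclosed, hlink⟩
  have := hrange t ht
  simp only [Finset.mem_Icc] at this ⊢
  omega

def IsFirstOccurrence (x : List ℕ) (p : ℕ) : Prop :=
  p < x.length ∧ ∀ s < p, x[s]? ≠ x[p]?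

lemma zero_mem_genVertices (x : List ℕ) : 0 ∈ genVertices x :=
  Finset.mem_insert_self _ _

lemma succ_mem_genVertices_iff {x : List ℕ} {p : ℕ} :
    p + 1 ∈ genVertices x ↔ IsFirstOccurrence x p := by
  simp [genVertices, IsFirstOccurrence]

lemma le_length_of_mem_genVertices {x : List ℕ} {i : ℕ} (h : i ∈ genVertices x) :
    i ≤ x.length := by
  rcases i with _ | p
  · exact Nat.zero_le _
  · exact (succ_mem_genVertices_iff.mp h).1

def liftPos (m s : ℕ) : ℕ := if s < m then s else s + 2

def liftVertex (m i : ℕ) : ℕ := if i ≤ m then i else i + 2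

def dropVertex (m j : ℕ) : ℕ := if j ≤ m then j else j - 2

section Index

variable (m : ℕ)

lemma liftPos_strictMono : StrictMono (liftPos m) := by
  intro s t h
  simp only [liftPos]
  split_ifs <;> omega

lemma eq_or_eq_or_eq_liftPos (q : ℕ) : q = m ∨ q = m + 1 ∨ ∃ p, q = liftPos m p := by
  rcases lt_or_ge q m with h | h
  · exact .inr (.inr ⟨q, by simp [liftPos, h]⟩)
  · rcases Nat.lt_or_ge q (m + 2) with h' | h'
    · omega
    · exact .inr (.inr ⟨q - 2, by simp only [liftPos]; split_ifs <;> omega⟩)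

lemma liftPos_ne (s : ℕ) : liftPos m s ≠ m + 1 := by
  simp only [liftPos]
  split_ifs <;> omega

lemma liftVertex_succ (p : ℕ) : liftVertex m (p + 1) = liftPos m p + 1 := by
  simp only [liftVertex, liftPos]
  split_ifs <;> omega

lemma liftVertex_zero : liftVertex m 0 = 0 := by
  simp [liftVertex]

lemma liftVertex_ne (i : ℕ) : liftVertex m i ≠ m + 1 := by
  simp only [liftVertex]
  split_ifs <;> omega

lemma liftVertex_monotone : Monotone (liftVertex m) := by
  intro i j h
  simp only [liftVertex]
  split_ifs <;> omega

lemma dropVertex_liftVertex (i : ℕ) : dropVertex m (liftVertex m i) = i := by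
  simp only [dropVertex, liftVertex]
  split_ifs <;> omega

lemma dropVertex_liftPos (s : ℕ) : dropVertex m (liftPos m s) = s := by
  simp only [dropVertex, liftPos]
  split_ifs <;> omega

lemma liftVertex_dropVertex_le (j : ℕ) : liftVertex m (dropVertex m j) ≤ j := by
  simp only [dropVertex, liftVertex]
  split_ifs <;> omega

end Index

section DoubleLetter

variable {u v : List ℕ} {a : ℕ}

lemma getElem?_liftPos (s : ℕ) :
    (u ++ a :: a :: v)[liftPos u.length s]? = (u ++ v)[s]? := by
  simp only [liftPos]
  split_ifs with h
  · rw [List.getElem?_append_left h, List.getElem?_append_left h]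
  · rw [List.getElem?_append_right (by omega), List.getElem?_append_right (by omega),
      show s + 2 - u.length = (s - u.length) + 2 by omega]
    simp

lemma getElem?_length : (u ++ a :: a :: v)[u.length]? = some a := by
  simp

lemma getElem?_length_succ : (u ++ a :: a :: v)[u.length + 1]? = some a := by
  rw [List.getElem?_append_right (by omega)]
  simp

lemma liftPos_lt_length_iff {s : ℕ} :
    liftPos u.length s < (u ++ a :: a :: v).length ↔ s < (u ++ v).length := by
  simp only [liftPos, List.length_append, List.length_cons]
  split_ifs <;> omega

lemma liftVertex_le_length {i : ℕ} (hi : i ≤ (u ++ v).length) :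
    liftVertex u.length i ≤ (u ++ a :: a :: v).length := by
  simp only [liftVertex, List.length_append, List.length_cons] at hi ⊢
  split_ifs <;> omega

lemma dropVertex_le_length {j : ℕ} (hj : j ≤ (u ++ a :: a :: v).length) :
    dropVertex u.length j ≤ (u ++ v).length := by
  simp only [dropVertex, List.length_append, List.length_cons] at hj ⊢
  split_ifs <;> omega

lemma liftPos_length :
    liftPos u.length (u ++ v).length = (u ++ a :: a :: v).length := by
  simp only [liftPos, List.length_append, List.length_cons]
  split_ifs <;> omega

lemma exists_eq_liftPos_of_getElem?_ne {q : ℕ} (hq : (u ++ a :: a :: v)[q]? ≠ some a) :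
    ∃ p, q = liftPos u.length p := by
  rcases eq_or_eq_or_eq_liftPos u.length q with rfl | rfl | h
  · exact absurd getElem?_length hq
  · exact absurd getElem?_length_succ hq
  · exact h

lemma not_mem_of_pairMatchedWord (h : PairMatchedWord (u ++ a :: a :: v)) : a ∉ u ++ v := by
  have h2 := h a (by simp)
  simp only [List.count_append, List.count_cons_self] at h2
  rw [← List.count_eq_zero, List.count_append]
  omega

lemma PairMatchedWord.of_append_cons_cons (h : PairMatchedWord (u ++ a :: a :: v)) :
    PairMatchedWord (u ++ v) := by
  intro b hb
  have hba : b ≠ a := fun hab => not_mem_of_pairMatchedWord h (hab ▸ hb)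
  have h2 := h b (by simp only [List.mem_append, List.mem_cons] at hb ⊢; tauto)
  simpa [List.count_append, List.count_cons, hba, hba.symm] using h2

lemma eq_or_eq_of_getElem?_eq_some (ha : a ∉ u ++ v) {q : ℕ}
    (hq : (u ++ a :: a :: v)[q]? = some a) : q = u.length ∨ q = u.length + 1 := by
  rcases eq_or_eq_or_eq_liftPos u.length q with h | h | ⟨p, rfl⟩
  · exact .inl h
  · exact .inr h
  · rw [getElem?_liftPos] at hq
    exact absurd (List.mem_of_getElem? hq) ha

lemma isFirstOccurrence_liftPos_iff (ha : a ∉ u ++ v) {p : ℕ} :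
    IsFirstOccurrence (u ++ a :: a :: v) (liftPos u.length p) ↔ IsFirstOccurrence (u ++ v) p := by
  rw [IsFirstOccurrence, IsFirstOccurrence, liftPos_lt_length_iff, getElem?_liftPos]
  refine and_congr_right fun _ => ⟨fun h s hs heq => ?_, fun h q hq heq => ?_⟩
  · exact h _ (liftPos_strictMono _ hs) (by rwa [getElem?_liftPos])
  · rcases eq_or_eq_or_eq_liftPos u.length q with rfl | rfl | ⟨s, rfl⟩
    · exact ha (List.mem_of_getElem? (heq ▸ getElem?_length))
    · exact ha (List.mem_of_getElem? (heq ▸ getElem?_length_succ))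
    · rw [getElem?_liftPos] at heq
      exact h s ((liftPos_strictMono _).lt_iff_lt.mp hq) heq

lemma liftVertex_mem_genVertices_iff (ha : a ∉ u ++ v) {i : ℕ} :
    liftVertex u.length i ∈ genVertices (u ++ a :: a :: v) ↔ i ∈ genVertices (u ++ v) := by
  rcases i with _ | p
  · simp only [liftVertex_zero, zero_mem_genVertices]
  · rw [liftVertex_succ, succ_mem_genVertices_iff, succ_mem_genVertices_iff,
      isFirstOccurrence_liftPos_iff ha]

lemma length_succ_mem_genVertices (ha : a ∉ u ++ v) :
    u.length + 1 ∈ genVertices (u ++ a :: a :: v) := by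
  refine succ_mem_genVertices_iff.mpr ⟨by simp, fun s hs heq => ha ?_⟩
  rw [getElem?_length, List.getElem?_append_left hs] at heq
  exact List.mem_append_left v (List.mem_of_getElem? heq)

lemma mem_genVertices_cases (ha : a ∉ u ++ v) {x : ℕ}
    (hx : x ∈ genVertices (u ++ a :: a :: v)) :
    x = u.length + 1 ∨ ∃ i ∈ genVertices (u ++ v), x = liftVertex u.length i := by
  rcases x with _ | q
  · exact .inr ⟨0, zero_mem_genVertices _, (liftVertex_zero _).symm⟩
  rw [succ_mem_genVertices_iff] at hx
  rcases eq_or_eq_or_eq_liftPos u.length q with rfl | rfl | ⟨p, rfl⟩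
  · exact .inl rfl
  · exact absurd (getElem?_length.trans getElem?_length_succ.symm) (hx.2 _ (by omega))
  · exact .inr ⟨p + 1, succ_mem_genVertices_iff.mpr ((isFirstOccurrence_liftPos_iff ha).mp hx),
      (liftVertex_succ _ _).symm⟩

section Circuit

variable {n : ℕ} {π : ℕ → ℕ}

lemma apply_length_add_two (hπ : π ∈ PiStar (u ++ a :: a :: v) n) :
    π (u.length + 2) = π u.length := by
  exact (eq_of_wignerLink_eq (hπ.2.2 u.length (u.length + 1) (by simp) (by simp)
    (getElem?_length.trans getElem?_length_succ.symm))).symm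

lemma apply_liftVertex (hπ : π ∈ PiStar (u ++ a :: a :: v) n) (s : ℕ) :
    π (liftVertex u.length s) = π (liftPos u.length s) := by
  simp only [liftVertex, liftPos]
  split_ifs with hle hlt
  · rfl
  · rw [show s = u.length by omega, apply_length_add_two hπ]
  · omega
  · rfl

lemma apply_liftVertex_dropVertex (hπ : π ∈ PiStar (u ++ a :: a :: v) n) {j : ℕ}
    (hj : j ≠ u.length + 1) : π (liftVertex u.length (dropVertex u.length j)) = π j := by
  rcases le_or_gt j u.length with h | h
  · simp only [dropVertex, liftVertex, if_pos h]
  · rw [apply_liftVertex hπ]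
    congr 1
    simp only [dropVertex, liftPos]
    split_ifs <;> omega

lemma comp_liftVertex_mem_piStar (hπ : π ∈ PiStar (u ++ a :: a :: v) n) :
    π ∘ liftVertex u.length ∈ PiStar (u ++ v) n := by
  obtain ⟨hrange, hclosed, hlink⟩ := hπ
  refine ⟨fun t ht => hrange _ (liftVertex_le_length ht), ?_, fun s t hs ht hst => ?_⟩
  · simpa only [Function.comp_apply, liftVertex_zero,
      apply_liftVertex ⟨hrange, hclosed, hlink⟩, liftPos_length (a := a)] using hclosed
  · simp only [Function.comp_apply, liftVertex_succ, apply_liftVertex ⟨hrange, hclosed, hlink⟩]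
    refine hlink _ _ (liftPos_lt_length_iff.mpr hs) (liftPos_lt_length_iff.mpr ht) ?_
    rwa [getElem?_liftPos, getElem?_liftPos]

def extendCircuit (π : ℕ → ℕ) (m c : ℕ) : ℕ → ℕ :=
  fun t => if t = m + 1 then c else π (dropVertex m t)

lemma extendCircuit_liftVertex (m c i : ℕ) : extendCircuit π m c (liftVertex m i) = π i := by
  simp only [extendCircuit, if_neg (liftVertex_ne m i), dropVertex_liftVertex]

lemma extendCircuit_liftPos (m c s : ℕ) : extendCircuit π m c (liftPos m s) = π s := by
  simp only [extendCircuit, if_neg (liftPos_ne m s), dropVertex_liftPos]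

lemma extendCircuit_mem_piStar (hπ : π ∈ PiStar (u ++ v) n) {c : ℕ}
    (hc : c ∈ Finset.Icc 1 n) (ha : a ∉ u ++ v) :
    extendCircuit π u.length c ∈ PiStar (u ++ a :: a :: v) n := by
  obtain ⟨hrange, hclosed, hlink⟩ := hπ
  have hedge (s : ℕ) : wignerLink (extendCircuit π u.length c (liftPos u.length s))
      (extendCircuit π u.length c (liftPos u.length s + 1)) = wignerLink (π s) (π (s + 1)) := by
    rw [← liftVertex_succ, extendCircuit_liftVertex, extendCircuit_liftPos]
  have hdouble : ∀ q, q = u.length ∨ q = u.length + 1 →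
      wignerLink (extendCircuit π u.length c q) (extendCircuit π u.length c (q + 1)) =
        wignerLink (π u.length) c := by
    rintro q (rfl | rfl)
    · simp [extendCircuit, dropVertex]
    · simp [extendCircuit, dropVertex, wignerLink_comm c]
  refine ⟨fun t ht => ?_, ?_, fun s t hs ht hst => ?_⟩
  · unfold extendCircuit
    split_ifs
    · exact hc
    · exact hrange _ (dropVertex_le_length ht)
  · have h0 := extendCircuit_liftVertex (π := π) u.length c 0
    rw [liftVertex_zero] at h0
    rw [h0, ← liftPos_length, extendCircuit_liftPos, hclosed]
  by_cases hsa : (u ++ a :: a :: v)[s]? = some a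
  · rw [hdouble s (eq_or_eq_of_getElem?_eq_some ha hsa),
      hdouble t (eq_or_eq_of_getElem?_eq_some ha (hst.symm.trans hsa))]
  · obtain ⟨s, rfl⟩ := exists_eq_liftPos_of_getElem?_ne hsa
    obtain ⟨t, rfl⟩ := exists_eq_liftPos_of_getElem?_ne fun h => hsa (hst.trans h)
    rw [hedge, hedge]
    refine hlink s t (liftPos_lt_length_iff.mp hs) (liftPos_lt_length_iff.mp ht) ?_
    rwa [getElem?_liftPos, getElem?_liftPos] at hst

theorem exists_isPhi {w : List ℕ} (hw : IsCatalanWord w) : ∃ φ, IsPhi w φ := by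
  obtain ⟨hpm, hred⟩ := hw
  induction hred with
  | nil =>
    refine ⟨id, fun j hj => ?_⟩
    obtain rfl : j = 0 := Nat.le_zero.mp hj
    exact ⟨zero_mem_genVertices _, le_rfl, fun _ _ _ => rfl⟩
  | step u v a _ ih =>
    have ha := not_mem_of_pairMatchedWord hpm
    obtain ⟨φ, hφ⟩ := ih hpm.of_append_cons_cons
    refine ⟨fun j => if j = u.length + 1 then j
      else liftVertex u.length (φ (dropVertex u.length j)), fun j hj => ?_⟩
    dsimp only
    split_ifs with hjm
    · exact ⟨hjm ▸ length_succ_mem_genVertices ha, le_rfl, fun _ _ _ => rfl⟩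
    obtain ⟨hgen, hle, hφj⟩ := hφ _ (dropVertex_le_length hj)
    refine ⟨(liftVertex_mem_genVertices_iff ha).mpr hgen,
      (liftVertex_monotone _ hle).trans (liftVertex_dropVertex_le _ _), fun n π hπ => ?_⟩
    rw [← apply_liftVertex_dropVertex hπ hjm]
    exact hφj n _ (comp_liftVertex_mem_piStar hπ)

theorem exists_injOn_genVertices {w : List ℕ} (hw : IsCatalanWord w) :
    ∃ n, ∃ π ∈ PiStar w n, Set.InjOn π (genVertices w) := by
  obtain ⟨hpm, hred⟩ := hw
  induction hred with
  | nil =>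
    refine ⟨1, fun _ => 1, ⟨fun _ _ => by simp, rfl, fun _ _ _ _ _ => rfl⟩, ?_⟩
    intro x hx y hy _
    exact (Nat.le_zero.mp (le_length_of_mem_genVertices hx)).trans
      (Nat.le_zero.mp (le_length_of_mem_genVertices hy)).symm
  | step u v a _ ih =>
    have ha := not_mem_of_pairMatchedWord hpm
    obtain ⟨n, π, hπ, hinj⟩ := ih hpm.of_append_cons_cons
    refine ⟨n + 1, extendCircuit π u.length (n + 1),
      extendCircuit_mem_piStar (piStar_mono _ n.le_succ hπ) (by simp) ha, ?_⟩
    have hlt : ∀ i ∈ genVertices (u ++ v), π i < n + 1 := fun i hi => by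
      have := hπ.1 i (le_length_of_mem_genVertices hi)
      simp only [Finset.mem_Icc] at this
      omega
    have hnew : extendCircuit π u.length (n + 1) (u.length + 1) = n + 1 := if_pos rfl
    intro x hx y hy hxy
    rcases mem_genVertices_cases ha hx with rfl | ⟨i, hi, rfl⟩ <;>
      rcases mem_genVertices_cases ha hy with rfl | ⟨j, hj, rfl⟩
    · rfl
    · rw [hnew, extendCircuit_liftVertex] at hxy
      exact absurd hxy (hlt j hj).ne'
    · rw [hnew, extendCircuit_liftVertex] at hxy
      exact absurd hxy (hlt i hi).ne
    · rw [extendCircuit_liftVertex, extendCircuit_liftVertex] at hxy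
      rw [hinj hi hj hxy]

/-- For a Catalan word `w` of length `2k` and a non-generating vertex
`j ≤ 2k`, there is a unique generating vertex `i < j` with `π(j) = π(i)` for
every circuit `π ∈ Π*(w)` (for every `n`). -/
theorem stmt17 (k : ℕ) (w : List ℕ) (hw : w.length = 2 * k)
    (hcat : IsCatalanWord w) (j : ℕ) (hj : j ≤ 2 * k) (hjS : j ∉ genVertices w) :
    ∃! i : ℕ, i ∈ genVertices w ∧ i < j ∧
      ∀ (n : ℕ) (π : ℕ → ℕ), π ∈ PiStar w n → π j = π i := by
  obtain ⟨φ, hφ⟩ := exists_isPhi hcat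
  obtain ⟨n, π, hπ, hinj⟩ := exists_injOn_genVertices hcat
  obtain ⟨hgen, hle, hφj⟩ := hφ j (hw ▸ hj)
  refine ⟨φ j, ⟨hgen, hle.lt_of_ne fun h => hjS (h ▸ hgen), hφj⟩, ?_⟩
  rintro i ⟨hi, -, hπi⟩
  exact hinj hi hgen ((hπi n π hπ).symm.trans (hφj n π hπ))
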